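/- If G is a k-regular bipartite graph with k ≥ 4, then G has a color-blind distinguishing 2-edge-coloring, i.e., dal(G) ≤ 2 (assuming the theorem of Thomassen/Henning–Yeo that every k-regular k-uniform hypergraph with k ≥ 4 is 2-colorable). -/
import Mathlib

open Finset

/-- The color-blind partition of `v`: the multiset of (nonzero) counts of incident
edges of each color, i.e. the partition of `deg v` with trailing zeroes removed. -/
def cbp {V : Type*} [Fintype V] [DecidableEq V] (G : SimpleGraph V) [DecidableRel G.Adj]
    {k : ℕ} (c : Sym2 V → Fin k) (v : V) : Multiset ℕ :=
  (((Finset.univ : Finset (Fin k)).val.map fun i =>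
    ((G.neighborFinset v).filter fun w => c s(v, w) = i).card).filter fun m => m ≠ 0)

/-- `c` is a color-blind distinguishing edge-coloring of `G`. -/
def IsCBD {V : Type*} [Fintype V] [DecidableEq V] (G : SimpleGraph V) [DecidableRel G.Adj]
    {k : ℕ} (c : Sym2 V → Fin k) : Prop :=
  ∀ u v : V, G.Adj u v → cbp G c u ≠ cbp G c v

theorem regular_bipartite_dal_le_two {V : Type*} [Fintype V] [DecidableEq V]
    (G : SimpleGraph V) [DecidableRel G.Adj] (k : ℕ) (hk : 4 ≤ k)
    (b : V → Bool) (hbip : ∀ u v, G.Adj u v → b u ≠ b v)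
    (hreg : ∀ v, G.degree v = k)
    (H2col : ∀ (n : ℕ) (E : Fin n → Finset (Fin n)),
      (∀ i, (E i).card = k) →
      (∀ u : Fin n, (Finset.univ.filter fun i => u ∈ E i).card = k) →
      ∃ f : Fin n → Bool, ∀ i, (∃ v ∈ E i, f v = true) ∧ (∃ v ∈ E i, f v = false)) :
    ∃ c : Sym2 V → Fin 2, IsCBD G c := by
  classical
  have hk0 : k ≠ 0 := by omega
  set X : Finset V := univ.filter (fun v => b v = false) with hXdef
  set Y : Finset V := univ.filter (fun v => b v = true) with hYdef
  have hmemX : ∀ v, v ∈ X ↔ b v = false := by intro v; simp [hXdef]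
  have hmemY : ∀ v, v ∈ Y ↔ b v = true := by intro v; simp [hYdef]
  have hnbY : ∀ {x w : V}, b x = false → G.Adj x w → b w = true := by
    intro x w hx h
    have := hbip x w h
    cases hbw : b w
    · rw [hx, hbw] at this; exact absurd rfl this
    · rfl
  have hnbX : ∀ {y w : V}, b y = true → G.Adj y w → b w = false := by
    intro y w hy h
    have := hbip y w h
    cases hbw : b w
    · rfl
    · rw [hy, hbw] at this; exact absurd rfl this
  -- N(x) for x ∈ X is Y.filter (G.Adj x), etc.
  have hNx : ∀ x : V, b x = false → G.neighborFinset x = Y.filter (G.Adj x) := by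
    intro x hx
    ext w
    simp only [SimpleGraph.mem_neighborFinset, mem_filter, hmemY]
    exact ⟨fun h => ⟨hnbY hx h, h⟩, fun h => h.2⟩
  have hNy : ∀ y : V, b y = true → G.neighborFinset y = X.filter (G.Adj y) := by
    intro y hy
    ext w
    simp only [SimpleGraph.mem_neighborFinset, mem_filter, hmemX]
    exact ⟨fun h => ⟨hnbX hy h, h⟩, fun h => h.2⟩
  have hdeg : ∀ v, (G.neighborFinset v).card = k := by
    intro v; rw [← hreg v]; rfl
  have hcard : X.card = Y.card := by
    have h1 : ∑ x ∈ X, (G.neighborFinset x).card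
        = ∑ x ∈ X, ∑ y ∈ Y, (if G.Adj x y then 1 else 0) := by
      refine Finset.sum_congr rfl fun x hx => ?_
      rw [hNx x ((hmemX x).1 hx), Finset.card_filter]
    have h2 : ∑ y ∈ Y, (G.neighborFinset y).card
        = ∑ y ∈ Y, ∑ x ∈ X, (if G.Adj x y then 1 else 0) := by
      refine Finset.sum_congr rfl fun y hy => ?_
      rw [hNy y ((hmemY y).1 hy), Finset.card_filter]
      refine Finset.sum_congr rfl fun x _ => ?_
      simp [G.adj_comm]
    have h3 : ∑ x ∈ X, (G.neighborFinset x).card = ∑ y ∈ Y, (G.neighborFinset y).card := by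
      rw [h1, h2, Finset.sum_comm]
    simp only [hdeg, Finset.sum_const, smul_eq_mul] at h3
    exact Nat.eq_of_mul_eq_mul_right (Nat.pos_of_ne_zero hk0) h3
  set n := X.card with hn
  let eX : {x // x ∈ X} ≃ Fin n := X.equivFin
  let eY : {y // y ∈ Y} ≃ Fin n := Y.equivFin.trans (finCongr hcard.symm)
  let E : Fin n → Finset (Fin n) :=
    fun i => univ.filter fun u => G.Adj (eY.symm i).1 (eX.symm u).1
  have hmemE : ∀ i u, u ∈ E i ↔ G.Adj (eY.symm i).1 (eX.symm u).1 := by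
    intro i u; simp [E]
  have hEcard : ∀ i, (E i).card = k := by
    intro i
    rw [← hdeg (eY.symm i).1]
    refine Finset.card_bij' (fun u _ => (eX.symm u).1)
      (fun w hw => eX ⟨w, (hmemX w).2
        (hnbX ((hmemY _).1 (eY.symm i).2) (by simpa using hw))⟩) ?_ ?_ ?_ ?_
    · intro u hu
      rw [SimpleGraph.mem_neighborFinset]
      exact (hmemE i u).1 hu
    · intro w hw
      rw [hmemE]
      simpa using (by simpa using hw : G.Adj (eY.symm i).1 w)
    · intro u hu; simp
    · intro w hw; simp
  have hEreg : ∀ u : Fin n, (univ.filter fun i => u ∈ E i).card = k := by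
    intro u
    rw [← hdeg (eX.symm u).1]
    have hbx : b (eX.symm u).1 = false := (hmemX _).1 (eX.symm u).2
    refine Finset.card_bij' (fun i _ => (eY.symm i).1)
      (fun w hw => eY ⟨w, (hmemY w).2
        (hnbY hbx (by simpa using hw))⟩) ?_ ?_ ?_ ?_
    · intro i hi
      rw [SimpleGraph.mem_neighborFinset]
      rw [Finset.mem_filter] at hi
      exact ((hmemE i u).1 hi.2).symm
    · intro w hw
      simp only [Finset.mem_filter, Finset.mem_univ, true_and, hmemE]
      simpa using ((by simpa using hw : G.Adj (eX.symm u).1 w)).symm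
    · intro i hi; simp
    · intro w hw; simp
  obtain ⟨f, hf⟩ := H2col n E hEcard hEreg
  set g : V → Bool := fun v => if h : v ∈ X then f (eX ⟨v, h⟩) else false with hg
  let c : Sym2 V → Fin 2 := Sym2.lift ⟨fun u v => if (g u || g v) then 1 else 0,
    by intro u v; simp [Bool.or_comm]⟩
  have hc : ∀ u v : V, c s(u, v) = if (g u || g v) then 1 else 0 := fun u v => rfl
  have hgY : ∀ v : V, b v = true → g v = false := by
    intro v hv
    have hvX : v ∉ X := by
      rw [hmemX v, hv]; simp
    simp only [hg]
    exact dif_neg hvX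
  -- the color of an edge is determined by g of its X-endpoint
  have hcX : ∀ x w : V, b x = false → G.Adj x w → c s(x, w) = if g x then 1 else 0 := by
    intro x w hx hadj
    rw [hc, hgY w (hnbY hx hadj), Bool.or_false]
  have hcY : ∀ y w : V, b y = true → G.Adj y w → c s(y, w) = if g w then 1 else 0 := by
    intro y w hy hadj
    rw [hc, hgY y hy, Bool.false_or]
  have huniv2 : (Finset.univ : Finset (Fin 2)).val = (0 ::ₘ 1 ::ₘ 0) := by decide
  have cbp_eq : ∀ v : V, cbp G c v = Multiset.filter (fun m => m ≠ 0)
      (((G.neighborFinset v).filter fun w => c s(v, w) = 0).card ::ₘ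
       (((G.neighborFinset v).filter fun w => c s(v, w) = 1).card ::ₘ 0)) := by
    intro v
    rw [cbp, huniv2]
    simp
  -- card of cbp at X vertices is 1
  have hcbpX : ∀ x : V, b x = false → Multiset.card (cbp G c x) = 1 := by
    intro x hx
    rw [cbp_eq]
    have hall : ∀ w ∈ G.neighborFinset x, c s(x, w) = if g x then 1 else 0 := by
      intro w hw
      exact hcX x w hx (by simpa using hw)
    cases hgx : g x
    · have h0 : ((G.neighborFinset x).filter fun w => c s(x, w) = 0) = G.neighborFinset x := by
        refine Finset.filter_true_of_mem fun w hw => ?_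
        rw [hall w hw, hgx]; rfl
      have h1 : ((G.neighborFinset x).filter fun w => c s(x, w) = 1) = ∅ := by
        refine Finset.filter_false_of_mem fun w hw => ?_
        rw [hall w hw, hgx]; decide
      rw [h0, h1, hdeg]
      simp [Multiset.filter_cons, Multiset.filter_singleton, hk0]
    · have h0 : ((G.neighborFinset x).filter fun w => c s(x, w) = 0) = ∅ := by
        refine Finset.filter_false_of_mem fun w hw => ?_
        rw [hall w hw, hgx]; decide
      have h1 : ((G.neighborFinset x).filter fun w => c s(x, w) = 1) = G.neighborFinset x := by
        refine Finset.filter_true_of_mem fun w hw => ?_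
        rw [hall w hw, hgx]; rfl
      rw [h0, h1, hdeg]
      simp [Multiset.filter_cons, Multiset.filter_singleton, hk0]
  -- card of cbp at Y vertices is 2
  have hcbpY : ∀ y : V, b y = true → Multiset.card (cbp G c y) = 2 := by
    intro y hy
    rw [cbp_eq]
    obtain ⟨⟨u1, hu1, hfu1⟩, ⟨u0, hu0, hfu0⟩⟩ := hf (eY ⟨y, (hmemY y).2 hy⟩)
    have hEy : ∀ u : Fin n, u ∈ E (eY ⟨y, (hmemY y).2 hy⟩) ↔ G.Adj y (eX.symm u).1 := by
      intro u
      rw [hmemE]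
      simp
    have hgu : ∀ u : Fin n, g (eX.symm u).1 = f u := by
      intro u
      simp only [hg]
      rw [dif_pos (eX.symm u).2]
      congr 1
      simp
    have hne1 : ((G.neighborFinset y).filter fun w => c s(y, w) = 1).card ≠ 0 := by
      rw [← Nat.pos_iff_ne_zero, Finset.card_pos]
      refine ⟨(eX.symm u1).1, Finset.mem_filter.2 ⟨?_, ?_⟩⟩
      · rw [SimpleGraph.mem_neighborFinset]; exact (hEy u1).1 hu1
      · rw [hcY y _ hy ((hEy u1).1 hu1), hgu, hfu1]; rfl
    have hne0 : ((G.neighborFinset y).filter fun w => c s(y, w) = 0).card ≠ 0 := by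
      rw [← Nat.pos_iff_ne_zero, Finset.card_pos]
      refine ⟨(eX.symm u0).1, Finset.mem_filter.2 ⟨?_, ?_⟩⟩
      · rw [SimpleGraph.mem_neighborFinset]; exact (hEy u0).1 hu0
      · rw [hcY y _ hy ((hEy u0).1 hu0), hgu, hfu0]; rfl
    simp [Multiset.filter_cons, Multiset.filter_singleton, hne0, hne1]
  refine ⟨c, fun u v hadj => ?_⟩
  intro heq
  have hcards := congrArg Multiset.card heq
  cases hbu : b u
  · rw [hcbpX u hbu, hcbpY v (hnbY hbu hadj)] at hcards
    exact absurd hcards (by decide)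
  · rw [hcbpY u hbu, hcbpX v (hnbX hbu hadj)] at hcards
    exact absurd hcards (by decide)
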